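/- arXiv:2407.05230 — 2 statements merged into one kernel-verified Lean document; each statement's English description precedes it below -/
import Mathlib

section
/- Let A be real symmetric with eigenvalues λ_1 ≥ ... ≥ λ_n, let p be fixed with δ_p = λ_p − λ_{p+1} > 0 and δ_p ≤ |λ_p|/4, and let r ≥ p be such that |x_0 − λ_i| ≥ |λ_p|/4 for all i > r, where x_0 = λ_p − δ_p/2. Then for z = x_0 + it, the spectral norm of Σ_{i>r} u_i u_iᵀ/(z − λ_i) is at most 1/√(t² + (λ_p/4)²), and consequently ∫_{-T}^{T} ‖(Σ_{i>r} u_i u_iᵀ/(z−λ_i)) E (Σ_{j>r} u_j u_jᵀ/(z−λ_j))‖ dt ≤ 16‖E‖/|λ_p| for any T ≥ |λ_p|/4. -/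
noncomputable def specNormC {n : ℕ} (M : Matrix (Fin n) (Fin n) ℂ) : ℝ :=
  ‖Matrix.toEuclideanCLM (𝕜 := ℂ) M‖

/-! On the tail, `R(z) = ∑_{i>r} (z - λᵢ)⁻¹ uᵢuᵢᵀ` acts as `x ↦ ∑_{i>r} (z - λᵢ)⁻¹ ⟪uᵢ, x⟫ uᵢ`,
so orthonormality and Bessel's inequality bound `‖R(z)‖` by `max_{i>r} |z - λᵢ|⁻¹`, which the
separation `|x₀ - λᵢ| ≥ |λ_p|/4` turns into `(t² + (λ_p/4)²)^(-1/2)`. Hence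
`‖R E R‖ ≤ ‖E‖ / (t² + a²)` with `a = |λ_p|/4`, and `∫ dt / (t² + a²)` is an arctangent
difference divided by `a`, at most `π / a ≤ 4 / a`. -/

open Finset Matrix MeasureTheory Real

section Orthonormal

variable {𝕜 E ι : Type*} [RCLike 𝕜] [NormedAddCommGroup E] [InnerProductSpace 𝕜 E]
  {v : ι → E}

theorem Orthonormal.norm_sum_smul_sq (hv : Orthonormal 𝕜 v) (s : Finset ι) (l : ι → 𝕜) :
    ‖∑ i ∈ s, l i • v i‖ ^ 2 = ∑ i ∈ s, ‖l i‖ ^ 2 := by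
  rw [← RCLike.ofReal_inj (K := 𝕜)]
  push_cast
  rw [← inner_self_eq_norm_sq_to_K, hv.inner_sum]
  exact sum_congr rfl fun i _ => RCLike.conj_mul (l i)

theorem Orthonormal.norm_sum_mul_inner_smul_le (hv : Orthonormal 𝕜 v) {s : Finset ι}
    {c : ι → 𝕜} {b : ℝ} (hb : 0 ≤ b) (hc : ∀ i ∈ s, ‖c i‖ ≤ b) (x : E) :
    ‖∑ i ∈ s, (c i * inner 𝕜 (v i) x) • v i‖ ≤ b * ‖x‖ := by
  refine le_of_pow_le_pow_left₀ two_ne_zero (by positivity) ?_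
  calc ‖∑ i ∈ s, (c i * inner 𝕜 (v i) x) • v i‖ ^ 2
      = ∑ i ∈ s, ‖c i‖ ^ 2 * ‖inner 𝕜 (v i) x‖ ^ 2 := by
        simp only [hv.norm_sum_smul_sq, norm_mul, mul_pow]
    _ ≤ ∑ i ∈ s, b ^ 2 * ‖inner 𝕜 (v i) x‖ ^ 2 := by
        gcongr with i hi
        exact hc i hi
    _ ≤ b ^ 2 * ‖x‖ ^ 2 := by
        rw [← mul_sum]
        gcongr
        exact hv.sum_inner_products_le x
    _ = (b * ‖x‖) ^ 2 := (mul_pow b ‖x‖ 2).symm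

end Orthonormal

section EuclideanOfReal

variable {m ι : Type*} [Fintype m]

def euclideanOfReal (w : m → ℝ) : EuclideanSpace ℂ m := WithLp.toLp 2 fun k => (w k : ℂ)

theorem inner_euclideanOfReal (w w' : m → ℝ) :
    inner ℂ (euclideanOfReal w) (euclideanOfReal w') = ((w ⬝ᵥ w' : ℝ) : ℂ) := by
  simp [euclideanOfReal, PiLp.inner_apply, dotProduct, mul_comm]

theorem orthonormal_euclideanOfReal [DecidableEq ι] {u : ι → m → ℝ}
    (hu : ∀ i j, u i ⬝ᵥ u j = if i = j then 1 else 0) :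
    Orthonormal ℂ fun i => euclideanOfReal (u i) := by
  rw [orthonormal_iff_ite]
  intro i j
  rw [inner_euclideanOfReal, hu]
  split_ifs <;> simp

variable [DecidableEq m]

theorem toEuclideanCLM_sum_smul_vecMulVec_apply (u : ι → m → ℝ) (s : Finset ι) (c : ι → ℂ)
    (x : EuclideanSpace ℂ m) :
    toEuclideanCLM (𝕜 := ℂ) (∑ i ∈ s, c i • (vecMulVec (u i) (u i)).map Complex.ofReal) x =
      ∑ i ∈ s, (c i * inner ℂ (euclideanOfReal (u i)) x) • euclideanOfReal (u i) := by
  ext k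
  simp only [map_sum, map_smul, _root_.sum_apply, _root_.smul_apply, WithLp.ofLp_sum,
    WithLp.ofLp_smul, ofLp_toEuclideanCLM, Finset.sum_apply, Pi.smul_apply, mulVec, dotProduct,
    map_apply, vecMulVec_apply, Complex.ofReal_mul, smul_eq_mul, mul_sum, euclideanOfReal,
    PiLp.inner_apply, RCLike.inner_apply, Complex.conj_ofReal, sum_mul]
  exact sum_congr rfl fun i _ => sum_congr rfl fun j _ => by ring

theorem norm_toEuclideanCLM_sum_smul_vecMulVec_le [DecidableEq ι] {u : ι → m → ℝ}
    (hu : ∀ i j, u i ⬝ᵥ u j = if i = j then 1 else 0)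
    {s : Finset ι} {c : ι → ℂ} {b : ℝ} (hb : 0 ≤ b) (hc : ∀ i ∈ s, ‖c i‖ ≤ b) :
    ‖toEuclideanCLM (𝕜 := ℂ) (∑ i ∈ s, c i • (vecMulVec (u i) (u i)).map Complex.ofReal)‖ ≤ b :=
  ContinuousLinearMap.opNorm_le_bound _ hb fun x => by
    rw [toEuclideanCLM_sum_smul_vecMulVec_apply]
    exact (orthonormal_euclideanOfReal hu).norm_sum_mul_inner_smul_le hb hc x

end EuclideanOfReal

theorem norm_inv_ofReal_add_mul_I_sub_le {x t l a : ℝ} (ha : a ≠ 0) (h : |a| ≤ |x - l|) :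
    ‖((x : ℂ) + t * Complex.I - l)⁻¹‖ ≤ 1 / √(t ^ 2 + a ^ 2) := by
  have hz : (x : ℂ) + t * Complex.I - l = ((x - l : ℝ) : ℂ) + t * Complex.I := by push_cast; ring
  have hpos : 0 < a ^ 2 + t ^ 2 :=
    add_pos_of_pos_of_nonneg (pow_two_pos_of_ne_zero ha) (sq_nonneg t)
  rw [norm_inv, hz, Complex.norm_add_mul_I, one_div, add_comm (t ^ 2)]
  exact inv_anti₀ (Real.sqrt_pos.2 hpos) (Real.sqrt_le_sqrt (by linarith [sq_le_sq.mpr h]))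

theorem integral_one_div_sq_add_sq {a : ℝ} (ha : a ≠ 0) (x y : ℝ) :
    ∫ t in x..y, 1 / (t ^ 2 + a ^ 2) = (arctan (y / a) - arctan (x / a)) / a := by
  have hderiv (t : ℝ) : HasDerivAt (fun s => arctan (s / a) / a) (1 / (t ^ 2 + a ^ 2)) t := by
    refine (((hasDerivAt_arctan (t / a)).comp t ((hasDerivAt_id t).div_const a)).div_const
      a).congr_deriv ?_
    field_simp
    ring
  rw [intervalIntegral.integral_eq_sub_of_hasDerivAt (fun t _ => hderiv t), sub_div]
  exact (continuous_const.div (by fun_prop) fun t => by positivity).intervalIntegrable _ _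

theorem integral_one_div_sq_add_sq_le {a : ℝ} (ha : 0 < a) (x y : ℝ) :
    ∫ t in x..y, 1 / (t ^ 2 + a ^ 2) ≤ π / a := by
  rw [integral_one_div_sq_add_sq ha.ne']
  gcongr
  linarith [arctan_lt_pi_div_two (y / a), neg_pi_div_two_lt_arctan (x / a)]

theorem integral_norm_mul_mul_le {R : Type*} [SeminormedRing R] {S : ℝ → R} (M : R)
    {a x y : ℝ} (ha : a ≠ 0) (hxy : x ≤ y) (hS : ∀ t, ‖S t‖ ≤ 1 / √(t ^ 2 + a ^ 2)) :
    ∫ t in x..y, ‖S t * M * S t‖ ≤ π * ‖M‖ / |a| := by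
  rw [← sq_abs a] at hS
  have ha' : 0 < |a| := abs_pos.2 ha
  generalize |a| = a at hS ha'
  have hpoint (t : ℝ) : ‖S t * M * S t‖ ≤ ‖M‖ * (1 / (t ^ 2 + a ^ 2)) := by
    have hS' : ‖S t‖ ^ 2 ≤ 1 / (t ^ 2 + a ^ 2) := by
      calc ‖S t‖ ^ 2 ≤ (1 / √(t ^ 2 + a ^ 2)) ^ 2 := by gcongr; exact hS t
        _ = 1 / (t ^ 2 + a ^ 2) := by rw [div_pow, one_pow, sq_sqrt (by positivity)]
    calc ‖S t * M * S t‖ ≤ ‖S t‖ * ‖M‖ * ‖S t‖ := norm_mul₃_le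
      _ = ‖M‖ * ‖S t‖ ^ 2 := by ring
      _ ≤ ‖M‖ * (1 / (t ^ 2 + a ^ 2)) := by gcongr
  calc ∫ t in x..y, ‖S t * M * S t‖
      ≤ ∫ t in x..y, ‖M‖ * (1 / (t ^ 2 + a ^ 2)) := by
        rw [intervalIntegral.integral_of_le hxy, intervalIntegral.integral_of_le hxy]
        refine integral_mono_of_nonneg (.of_forall fun t => norm_nonneg _) ?_ (.of_forall hpoint)
        exact (continuous_const.mul (continuous_const.div (by fun_prop) fun t => by positivity)
          ).integrableOn_Ioc
    _ = ‖M‖ * ∫ t in x..y, 1 / (t ^ 2 + a ^ 2) := intervalIntegral.integral_const_mul _ _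
    _ ≤ ‖M‖ * (π / a) := by gcongr; exact integral_one_div_sq_add_sq_le ha' x y
    _ = π * ‖M‖ / a := by ring

theorem tail_resolvent_bound_general {n : ℕ} (E : Matrix (Fin n) (Fin n) ℝ)
    (lam : Fin n → ℝ) (u : Fin n → Fin n → ℝ)
    (hortho : ∀ i j, dotProduct (u i) (u j) = if i = j then (1:ℝ) else 0)
    (p : Fin n)
    (δp x₀ : ℝ) (hδpos : 0 < δp)
    (hδsmall : δp ≤ |lam p| / 4)
    (r : ℕ)
    (hsep : ∀ i : Fin n, r < (i : ℕ) → |lam p| / 4 ≤ |x₀ - lam i|)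
    (T : ℝ) (hT : |lam p| / 4 ≤ T) :
    (∀ t : ℝ,
      specNormC (∑ i ∈ Finset.univ.filter (fun i : Fin n => r < (i : ℕ)),
          (((x₀ + t * Complex.I) - (lam i : ℂ))⁻¹ •
            (Matrix.vecMulVec (u i) (u i)).map Complex.ofReal)) ≤
        1 / Real.sqrt (t ^ 2 + (lam p / 4) ^ 2)) ∧
    (∫ t in (-T)..T,
        specNormC ((∑ i ∈ Finset.univ.filter (fun i : Fin n => r < (i : ℕ)),
            (((x₀ + t * Complex.I) - (lam i : ℂ))⁻¹ •
              (Matrix.vecMulVec (u i) (u i)).map Complex.ofReal)) *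
          (E.map Complex.ofReal) *
          (∑ j ∈ Finset.univ.filter (fun j : Fin n => r < (j : ℕ)),
            (((x₀ + t * Complex.I) - (lam j : ℂ))⁻¹ •
              (Matrix.vecMulVec (u j) (u j)).map Complex.ofReal)))) ≤
      16 * specNormC (E.map Complex.ofReal) / |lam p| := by
  have hlam : 0 < |lam p| := by linarith
  have ha : lam p / 4 ≠ 0 := div_ne_zero (abs_pos.1 hlam) four_ne_zero
  have habs : |lam p / 4| = |lam p| / 4 := by simp [abs_div]
  have hres (t : ℝ) : specNormC (∑ i ∈ Finset.univ.filter (fun i : Fin n => r < (i : ℕ)),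
      (((x₀ + t * Complex.I) - (lam i : ℂ))⁻¹ •
        (Matrix.vecMulVec (u i) (u i)).map Complex.ofReal)) ≤
      1 / √(t ^ 2 + (lam p / 4) ^ 2) :=
    norm_toEuclideanCLM_sum_smul_vecMulVec_le hortho (by positivity) fun i hi =>
      norm_inv_ofReal_add_mul_I_sub_le ha (by rw [habs]; exact hsep i (mem_filter.1 hi).2)
  refine ⟨hres, ?_⟩
  simp only [specNormC, map_mul] at hres ⊢
  calc _ ≤ π * specNormC (E.map Complex.ofReal) / |lam p / 4| :=
        integral_norm_mul_mul_le _ ha (by linarith) hres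
    _ = 4 * π * specNormC (E.map Complex.ofReal) / |lam p| := by
        rw [habs]; field_simp
    _ ≤ 16 * specNormC (E.map Complex.ofReal) / |lam p| := by
        gcongr
        · exact norm_nonneg _
        · linarith [pi_le_four]

/-- Tail-resolvent bound: with `z = x₀ + it`, `x₀ = λ_p − δ_p/2`, and `|x₀ − λᵢ| ≥ |λ_p|/4`
for `i > r`, the tail `∑_{i>r} uᵢuᵢᵀ/(z − λᵢ)` has spectral norm at most
`1/√(t² + (λ_p/4)²)`, and `∫_{−T}^{T} ‖(∑_{i>r}) E (∑_{j>r})‖ dt ≤ 16‖E‖/|λ_p|`. -/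
theorem tail_resolvent_bound {n : ℕ} (A E : Matrix (Fin n) (Fin n) ℝ)
    (hA : A.IsSymm) (hE : E.IsSymm) (lam : Fin n → ℝ) (u : Fin n → Fin n → ℝ)
    (hmono : ∀ i j : Fin n, i ≤ j → lam j ≤ lam i)
    (hortho : ∀ i j, dotProduct (u i) (u j) = if i = j then (1:ℝ) else 0)
    (hdecomp : A = ∑ i, lam i • Matrix.vecMulVec (u i) (u i))
    (p psucc : Fin n) (hsucc : (psucc : ℕ) = (p : ℕ) + 1)
    (δp x₀ : ℝ) (hδp : δp = lam p - lam psucc) (hδpos : 0 < δp)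
    (hδsmall : δp ≤ |lam p| / 4)
    (r : ℕ) (hr : (p : ℕ) ≤ r)
    (hx₀ : x₀ = lam p - δp / 2)
    (hsep : ∀ i : Fin n, r < (i : ℕ) → |lam p| / 4 ≤ |x₀ - lam i|)
    (T : ℝ) (hT : |lam p| / 4 ≤ T) :
    (∀ t : ℝ,
      specNormC (∑ i ∈ Finset.univ.filter (fun i : Fin n => r < (i : ℕ)),
          (((x₀ + t * Complex.I) - (lam i : ℂ))⁻¹ •
            (Matrix.vecMulVec (u i) (u i)).map Complex.ofReal)) ≤
        1 / Real.sqrt (t ^ 2 + (lam p / 4) ^ 2)) ∧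
    (∫ t in (-T)..T,
        specNormC ((∑ i ∈ Finset.univ.filter (fun i : Fin n => r < (i : ℕ)),
            (((x₀ + t * Complex.I) - (lam i : ℂ))⁻¹ •
              (Matrix.vecMulVec (u i) (u i)).map Complex.ofReal)) *
          (E.map Complex.ofReal) *
          (∑ j ∈ Finset.univ.filter (fun j : Fin n => r < (j : ℕ)),
            (((x₀ + t * Complex.I) - (lam j : ℂ))⁻¹ •
              (Matrix.vecMulVec (u j) (u j)).map Complex.ofReal)))) ≤
      16 * specNormC (E.map Complex.ofReal) / |lam p| :=
  tail_resolvent_bound_general E lam u hortho p δp x₀ hδpos hδsmall r hsep T hT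
end

section
/- Let A be a real symmetric matrix with eigenvalues λ_1 ≥ ... ≥ λ_n and E real symmetric. If |λ_i − λ_j| ≥ 4‖E‖ for all i ∈ S, j ∉ S, then there exists a closed rectangular contour Γ in ℂ containing exactly the eigenvalues {λ_i : i ∈ S} of A in its interior, such that every point z ∈ Γ satisfies dist(z, spec(A)) ≥ 2‖E‖; moreover, by Weyl's inequality, every eigenvalue λ̃_i of A + E lies inside Γ if and only if i ∈ S. -/
noncomputable def specNormR {n : ℕ} (M : Matrix (Fin n) (Fin n) ℝ) : ℝ :=
  ‖Matrix.toEuclideanCLM (𝕜 := ℝ) M‖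

/-!
Let `g > 0` be the smallest gap between an eigenvalue `λₖ, k ∈ S` and an eigenvalue `λⱼ, j ∉ S`,
enlarged to at least `4‖E‖`, and let `U` be the union of the open squares of half-side `g / 2`
centred at the `λₖ, k ∈ S`. A boundary point of `U` lies outside every square, hence at distance
`≥ g / 2` from each `λₖ, k ∈ S`, and within `g / 2` of some `λₖ, k ∈ S` in real part, hence at
distance `≥ g - g / 2` from each `λⱼ, j ∉ S`. Since Weyl's inequality moves each eigenvalue by at
most `‖E‖ < g / 2`, `λ̃ᵢ` falls in the square around `λᵢ` when `i ∈ S` and stays out of all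
squares when `i ∉ S`.
-/

open Set Complex

def openSquare (c r : ℝ) : Set ℂ := Ioo (c - r) (c + r) ×ℂ Ioo (-r) r

lemma isOpen_openSquare (c r : ℝ) : IsOpen (openSquare c r) :=
  isOpen_Ioo.reProdIm isOpen_Ioo

lemma ofReal_mem_openSquare_iff {x c r : ℝ} : (x : ℂ) ∈ openSquare c r ↔ |x - c| < r := by
  simp only [openSquare, mem_reProdIm, ofReal_re, ofReal_im, mem_Ioo, abs_sub_lt_iff]
  constructor
  · rintro ⟨⟨h₁, h₂⟩, -⟩
    constructor <;> linarith
  · rintro ⟨h₁, h₂⟩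
    refine ⟨⟨?_, ?_⟩, ?_, ?_⟩ <;> linarith

lemma le_norm_sub_of_notMem_openSquare {z : ℂ} {c r : ℝ} (hz : z ∉ openSquare c r) :
    r ≤ ‖z - c‖ := by
  by_contra! hlt
  have hre : |z.re - c| < r := by
    simpa using (abs_re_le_norm (z - c)).trans_lt hlt
  have him : |z.im| < r := by
    simpa using (abs_im_le_norm (z - c)).trans_lt hlt
  rw [abs_sub_lt_iff] at hre
  rw [abs_lt] at him
  exact hz (mem_reProdIm.2 ⟨⟨by linarith, by linarith⟩, him⟩)

lemma abs_re_sub_le_of_mem_closure_openSquare {z : ℂ} {c r : ℝ}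
    (hz : z ∈ closure (openSquare c r)) : |z.re - c| ≤ r := by
  rw [openSquare, closure_reProdIm, mem_reProdIm] at hz
  have hre := closure_minimal Ioo_subset_Icc_self isClosed_Icc hz.1
  rw [mem_Icc] at hre
  rw [abs_sub_le_iff]
  constructor <;> linarith [hre.1, hre.2]

lemma exists_iUnion_rect_eq_biUnion_openSquare {ι : Type*} (lam : ι → ℝ) (S : Finset ι)
    (r : ℝ) : ∃ a b c d : ι → ℝ,
      ⋃ k, {z : ℂ | z.re ∈ Ioo (a k) (b k) ∧ z.im ∈ Ioo (c k) (d k)} =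
        ⋃ k ∈ S, openSquare (lam k) r := by
  classical
  -- indices outside `S` get the empty rectangle `Ioo (-r) (-r) = ∅` in the imaginary direction
  refine ⟨fun k => lam k - r, fun k => lam k + r, fun _ => -r,
    fun k => if k ∈ S then r else -r, ?_⟩
  ext z
  simp only [mem_iUnion, mem_ofPred_eq, openSquare, mem_reProdIm, exists_prop]
  refine exists_congr fun k => ?_
  by_cases hk : k ∈ S <;> simp [hk]

section Separation

variable {ι : Type*} {lam : ι → ℝ} {S : Finset ι} {g : ℝ}

lemma exists_pos_le_abs_sub [Fintype ι] (hlam : Function.Injective lam) (S : Finset ι) :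
    ∃ g₀ > 0, ∀ i ∈ S, ∀ j ∉ S, g₀ ≤ |lam i - lam j| := by
  classical
  rcases (S ×ˢ Sᶜ).eq_empty_or_nonempty with hempty | hne
  · refine ⟨1, one_pos, fun i hi j hj => ?_⟩
    have hmem : (i, j) ∈ S ×ˢ Sᶜ := Finset.mem_product.2 ⟨hi, Finset.mem_compl.2 hj⟩
    simp [hempty] at hmem
  · obtain ⟨⟨i₀, j₀⟩, hmem, hmin⟩ := (S ×ˢ Sᶜ).exists_min_image (fun p => |lam p.1 - lam p.2|) hne
    simp only [Finset.mem_product, Finset.mem_compl] at hmem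
    have hne' : lam i₀ ≠ lam j₀ := fun h => hmem.2 (hlam h ▸ hmem.1)
    refine ⟨_, abs_pos.2 (sub_ne_zero.2 hne'), fun i hi j hj => ?_⟩
    exact hmin (i, j) (Finset.mem_product.2 ⟨hi, Finset.mem_compl.2 hj⟩)

lemma ofReal_mem_biUnion_openSquare_iff (hsep : ∀ k ∈ S, ∀ j ∉ S, g ≤ |lam k - lam j|)
    {x ε : ℝ} {i : ι} (hx : |x - lam i| ≤ ε) (hε : 2 * ε < g) :
    (x : ℂ) ∈ ⋃ k ∈ S, openSquare (lam k) (g / 2) ↔ i ∈ S := by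
  simp only [mem_iUnion, ofReal_mem_openSquare_iff, exists_prop]
  constructor
  · rintro ⟨k, hk, hxk⟩
    by_contra hi
    have := hsep k hk i hi
    have := abs_sub_le (lam k) x (lam i)
    rw [abs_sub_comm] at hxk
    linarith
  · exact fun hi => ⟨i, hi, by linarith⟩

lemma half_le_norm_sub_of_mem_frontier (hsep : ∀ k ∈ S, ∀ j ∉ S, g ≤ |lam k - lam j|)
    {z : ℂ} (hz : z ∈ frontier (⋃ k ∈ S, openSquare (lam k) (g / 2))) (i : ι) :
    g / 2 ≤ ‖z - lam i‖ := by
  rw [(isOpen_iUnion fun k => isOpen_iUnion fun _ => isOpen_openSquare (lam k) (g / 2)).frontier_eq,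
    Finset.closure_biUnion] at hz
  obtain ⟨hclosure, hout⟩ := hz
  simp only [mem_iUnion, exists_prop, not_exists, not_and] at hclosure hout
  by_cases hi : i ∈ S
  · exact le_norm_sub_of_notMem_openSquare (hout i hi)
  · obtain ⟨k, hk, hzk⟩ := hclosure
    have hnear := abs_re_sub_le_of_mem_closure_openSquare hzk
    have hre : |z.re - lam i| ≤ ‖z - lam i‖ := by
      simpa using abs_re_le_norm (z - lam i)
    have := hsep k hk i hi
    have := abs_sub_le (lam k) z.re (lam i)
    rw [abs_sub_comm] at hnear
    linarith

end Separation

theorem exists_separating_contour_general {n : ℕ} (E : Matrix (Fin n) (Fin n) ℝ)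
    (lam lamt : Fin n → ℝ)
    (hdist : Function.Injective lam)
    (hWeyl : ∀ i, |lamt i - lam i| ≤ specNormR E)
    (S : Finset (Fin n))
    (hgap : ∀ i ∈ S, ∀ j ∉ S, 4 * specNormR E ≤ |lam i - lam j|) :
    ∃ (m : ℕ) (a b c d : Fin m → ℝ),
      (∀ i, ((lam i : ℂ) ∈
          ⋃ k, {z : ℂ | z.re ∈ Set.Ioo (a k) (b k) ∧ z.im ∈ Set.Ioo (c k) (d k)}) ↔ i ∈ S) ∧
      (∀ z ∈ frontier
          (⋃ k, {z : ℂ | z.re ∈ Set.Ioo (a k) (b k) ∧ z.im ∈ Set.Ioo (c k) (d k)}),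
        ∀ i, 2 * specNormR E ≤ ‖z - (lam i : ℂ)‖) ∧
      (∀ i, ((lamt i : ℂ) ∈
          ⋃ k, {z : ℂ | z.re ∈ Set.Ioo (a k) (b k) ∧ z.im ∈ Set.Ioo (c k) (d k)}) ↔ i ∈ S) := by
  have hε : 0 ≤ specNormR E := norm_nonneg _
  obtain ⟨g₀, hg₀, hsep₀⟩ := exists_pos_le_abs_sub hdist S
  set g := max (4 * specNormR E) g₀
  have hsep : ∀ k ∈ S, ∀ j ∉ S, g ≤ |lam k - lam j| :=
    fun k hk j hj => max_le (hgap k hk j hj) (hsep₀ k hk j hj)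
  have hg₀_le : g₀ ≤ g := le_max_right _ _
  have hε_le : 4 * specNormR E ≤ g := le_max_left _ _
  obtain ⟨a, b, c, d, hU⟩ := exists_iUnion_rect_eq_biUnion_openSquare lam S (g / 2)
  refine ⟨n, a, b, c, d, ?_⟩
  rw [hU]
  refine ⟨fun i => ?_, fun z hz i => ?_, fun i => ?_⟩
  · exact ofReal_mem_biUnion_openSquare_iff hsep (ε := 0) (by simp) (by linarith)
  · linarith [half_le_norm_sub_of_mem_frontier hsep hz i]
  · exact ofReal_mem_biUnion_openSquare_iff hsep (hWeyl i) (by linarith)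

/-- Existence of a separating contour: if the eigenvalues of `A` indexed by `S` are at distance
at least `4‖E‖` from those outside `S`, there is a region `U` bounded by finitely many
axis-parallel rectangles (a rectangular contour `Γ = frontier U`) containing exactly the
eigenvalues `λᵢ, i ∈ S` of `A`, whose boundary stays at distance at least `2‖E‖` from the
spectrum of `A`; moreover (by Weyl's inequality `|λ̃ᵢ − λᵢ| ≤ ‖E‖`) an eigenvalue `λ̃ᵢ` of
`A + E` lies in `U` iff `i ∈ S`. -/
theorem exists_separating_contour {n : ℕ} (A E : Matrix (Fin n) (Fin n) ℝ)
    (hA : A.IsSymm) (hE : E.IsSymm)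
    (lam lamt : Fin n → ℝ) (u v : Fin n → Fin n → ℝ)
    (hdist : Function.Injective lam)
    (hortho : ∀ i j, dotProduct (u i) (u j) = if i = j then (1:ℝ) else 0)
    (hdecomp : A = ∑ i, lam i • Matrix.vecMulVec (u i) (u i))
    (hortho' : ∀ i j, dotProduct (v i) (v j) = if i = j then (1:ℝ) else 0)
    (hdecomp' : A + E = ∑ i, lamt i • Matrix.vecMulVec (v i) (v i))
    (hWeyl : ∀ i, |lamt i - lam i| ≤ specNormR E)
    (S : Finset (Fin n))
    (hgap : ∀ i ∈ S, ∀ j ∉ S, 4 * specNormR E ≤ |lam i - lam j|) :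
    ∃ (m : ℕ) (a b c d : Fin m → ℝ),
      (∀ i, ((lam i : ℂ) ∈
          ⋃ k, {z : ℂ | z.re ∈ Set.Ioo (a k) (b k) ∧ z.im ∈ Set.Ioo (c k) (d k)}) ↔ i ∈ S) ∧
      (∀ z ∈ frontier
          (⋃ k, {z : ℂ | z.re ∈ Set.Ioo (a k) (b k) ∧ z.im ∈ Set.Ioo (c k) (d k)}),
        ∀ i, 2 * specNormR E ≤ ‖z - (lam i : ℂ)‖) ∧
      (∀ i, ((lamt i : ℂ) ∈
          ⋃ k, {z : ℂ | z.re ∈ Set.Ioo (a k) (b k) ∧ z.im ∈ Set.Ioo (c k) (d k)}) ↔ i ∈ S) :=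
  exists_separating_contour_general E lam lamt hdist hWeyl S hgap
end
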